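/- Let E and F be Banach lattices such that F has property (d), and let S, T : E → F be bounded linear operators with 0 ≤ S ≤ T (i.e. S is positive and T − S is positive). If T is almost limited, then S is almost limited. -/

import Mathlib

open Filter Topology Metric Set NormedSpace BoundedContinuousFunction

noncomputable section

/-- The value `|f| x` of the modulus of a functional `f` in the dual of a Banach lattice,
at a positive element `x`, given by the Riesz–Kantorovich formula. -/
def dualAbs {E : Type*} [NormedAddCommGroup E] [Lattice E] [HasSolidNorm E] [IsOrderedAddMonoid E] [NormedSpace ℝ E]
    (f : E →L[ℝ] ℝ) (x : E) : ℝ :=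
  sSup {r : ℝ | ∃ z : E, |z| ≤ x ∧ r = |f z|}

/-- Two functionals `f, g` on a Banach lattice are disjoint, i.e. `|f| ⊓ |g| = 0` in the dual
lattice; by the Riesz–Kantorovich formula this means that for every `x ≥ 0` the infimum of
`|f| y + |g| (x - y)` over `0 ≤ y ≤ x` is `0`. -/
def DualDisjoint {E : Type*} [NormedAddCommGroup E] [Lattice E] [HasSolidNorm E] [IsOrderedAddMonoid E] [NormedSpace ℝ E]
    (f g : E →L[ℝ] ℝ) : Prop :=
  ∀ x : E, 0 ≤ x → ∀ ε : ℝ, 0 < ε →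
    ∃ y : E, 0 ≤ y ∧ y ≤ x ∧ dualAbs f y + dualAbs g (x - y) < ε

/-- A sequence of functionals is weak* null if it converges to `0` pointwise. -/
def WeakStarNull {E : Type*} [NormedAddCommGroup E] [NormedSpace ℝ E]
    (f : ℕ → E →L[ℝ] ℝ) : Prop :=
  ∀ x : E, Tendsto (fun n => f n x) atTop (𝓝 0)

/-- A functional on a Banach lattice is positive if it is nonnegative on the positive cone. -/
def PositiveFunctional {E : Type*} [NormedAddCommGroup E] [Lattice E] [HasSolidNorm E] [IsOrderedAddMonoid E] [NormedSpace ℝ E]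
    (f : E →L[ℝ] ℝ) : Prop :=
  ∀ x : E, 0 ≤ x → 0 ≤ f x

/-- An operator between Banach lattices is positive if it maps the positive cone into
the positive cone. -/
def IsPositiveOp {E F : Type*} [NormedAddCommGroup E] [Lattice E] [HasSolidNorm E] [IsOrderedAddMonoid E] [NormedSpace ℝ E]
    [NormedAddCommGroup F] [Lattice F] [HasSolidNorm F] [IsOrderedAddMonoid F] [NormedSpace ℝ F] (T : E →L[ℝ] F) : Prop :=
  ∀ x : E, 0 ≤ x → 0 ≤ T x

/-- An operator `T : X → E` into a Banach lattice is almost limited if `‖T* fₙ‖ → 0` for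
every disjoint weak* null sequence `(fₙ)` in `E*`. -/
def AlmostLimited {X E : Type*} [NormedAddCommGroup X] [NormedSpace ℝ X]
    [NormedAddCommGroup E] [Lattice E] [HasSolidNorm E] [IsOrderedAddMonoid E] [NormedSpace ℝ E] (T : X →L[ℝ] E) : Prop :=
  ∀ f : ℕ → E →L[ℝ] ℝ, WeakStarNull f → Pairwise (fun n m => DualDisjoint (f n) (f m)) →
    Tendsto (fun n => ‖(f n).comp T‖) atTop (𝓝 0)

/-- A Banach lattice `E` has property (d) if `|fₙ| → 0` in the weak* topology for every
disjoint weak* null sequence `(fₙ)` in `E*` (it suffices to test `|fₙ|` on the positive cone). -/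
def PropertyD (E : Type*) [NormedAddCommGroup E] [Lattice E] [HasSolidNorm E] [IsOrderedAddMonoid E] [NormedSpace ℝ E] : Prop :=
  ∀ f : ℕ → E →L[ℝ] ℝ, WeakStarNull f → Pairwise (fun n m => DualDisjoint (f n) (f m)) →
    ∀ x : E, 0 ≤ x → Tendsto (fun n => dualAbs (f n) x) atTop (𝓝 0)

/-- A Banach lattice `E` has the dual positive Schur property if every weak* null sequence of
positive functionals is norm null. -/
def DualPositiveSchur (E : Type*) [NormedAddCommGroup E] [Lattice E] [HasSolidNorm E] [IsOrderedAddMonoid E] [NormedSpace ℝ E] : Prop :=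
  ∀ f : ℕ → E →L[ℝ] ℝ, WeakStarNull f → (∀ n, PositiveFunctional (f n)) →
    Tendsto (fun n => ‖f n‖) atTop (𝓝 0)

/-- A Banach lattice `F` has the positive Schur property if every weakly null sequence of
positive elements is norm null. -/
def PositiveSchur (F : Type*) [NormedAddCommGroup F] [Lattice F] [HasSolidNorm F] [IsOrderedAddMonoid F] [NormedSpace ℝ F] : Prop :=
  ∀ x : ℕ → F, (∀ g : F →L[ℝ] ℝ, Tendsto (fun n => g (x n)) atTop (𝓝 0)) →
    (∀ n, 0 ≤ x n) → Tendsto (fun n => ‖x n‖) atTop (𝓝 0)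

/-- An operator is weakly compact if the image of the closed unit ball is relatively
compact in the weak topology. -/
def IsWeaklyCompactOp {X Y : Type*} [NormedAddCommGroup X] [NormedSpace ℝ X]
    [NormedAddCommGroup Y] [NormedSpace ℝ Y] (T : X →L[ℝ] Y) : Prop :=
  IsCompact (closure (toWeakSpaceCLM ℝ Y '' (T '' closedBall 0 1)))

/-- A lattice is σ-Dedekind complete if every countable nonempty order-bounded subset has a
supremum. -/
def SigmaDedekindComplete (E : Type*) [Lattice E] : Prop :=
  ∀ s : Set E, s.Countable → s.Nonempty → BddAbove s → ∃ a, IsLUB s a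

/-- The norm of a Banach lattice is order continuous if `x_α ↓ 0` implies `‖x_α‖ ↓ 0`,
for every decreasing net `(x_α)` with infimum `0`. -/
def HasOrderContinuousNorm (E : Type*) [NormedAddCommGroup E] [Lattice E] [HasSolidNorm E] [IsOrderedAddMonoid E] : Prop :=
  ∀ ⦃ι : Type*⦄ [Preorder ι] [Nonempty ι] [IsDirected ι (· ≤ ·)] (x : ι → E),
    Antitone x → IsGLB (Set.range x) 0 → Tendsto (fun i => ‖x i‖) atTop (𝓝 0)

/-- A Banach space is reflexive if the canonical embedding into its double dual is
surjective. -/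
def ReflexiveSpace (X : Type*) [NormedAddCommGroup X] [NormedSpace ℝ X] : Prop :=
  Function.Surjective (inclusionInDoubleDual ℝ X)

/-- The Banach lattice `ℓ^∞` of bounded real sequences. -/
abbrev LinftySeq : Type := ℕ →ᵇ ℝ

/-!
The modulus `|f|` of a functional on a Banach lattice, given on the positive cone by the
Riesz–Kantorovich formula, is additive there by the Riesz decomposition property and so extends
to a bounded linear functional. Passing to moduli keeps a disjoint weak* null sequence `(fₙ)`
disjoint, and property (d) makes `(|fₙ|)` weak* null as well, so `‖|fₙ| ∘ T‖ → 0` because `T` is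
almost limited. Since `|fₙ (S x)| ≤ |fₙ| (S |x|) ≤ |fₙ| (T |x|)`, we get `‖fₙ ∘ S‖ ≤ ‖|fₙ| ∘ T‖`.
-/

theorem exists_add_eq_of_abs_le_add {α : Type*} [Lattice α] [AddCommGroup α]
    [IsOrderedAddMonoid α] {x y z : α} (hx : 0 ≤ x) (hy : 0 ≤ y) (hz : |z| ≤ x + y) :
    ∃ u v : α, u + v = z ∧ |u| ≤ x ∧ |v| ≤ y := by
  have hzle : z ≤ x + y := (le_abs_self z).trans hz
  have hlez : -(x + y) ≤ z := neg_le.1 ((neg_le_abs z).trans hz)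
  -- truncate `z` at `±x`; the remainder is bounded by `y`
  refine ⟨(z ⊔ -x) ⊓ x, 0 ⊓ (z + x) ⊔ (z - x), ?_, ?_, ?_⟩
  · rw [add_comm, ← eq_sub_iff_add_eq, sub_inf, sub_sup, sub_self, sub_neg_eq_add]
  · refine abs_le'.2 ⟨inf_le_right, neg_le.2 (le_inf le_sup_right ?_)⟩
    exact (neg_nonpos.2 hx).trans hx
  · refine abs_le'.2 ⟨sup_le (inf_le_left.trans hy) (by rwa [sub_le_iff_le_add']), ?_⟩
    refine neg_le.2 (le_trans (le_inf (neg_nonpos.2 hy) ?_) le_sup_left)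
    calc -y = -(x + y) + x := by abel
      _ ≤ z + x := by gcongr

section DualAbs

variable {E : Type*} [NormedAddCommGroup E] [Lattice E] [HasSolidNorm E] [IsOrderedAddMonoid E]
  [NormedSpace ℝ E] (f : E →L[ℝ] ℝ)

theorem abs_apply_le_of_abs_le {x z : E} (hz : |z| ≤ x) : |f z| ≤ ‖f‖ * ‖x‖ := by
  have hzx : ‖z‖ ≤ ‖x‖ :=
    HasSolidNorm.solid (by rwa [abs_of_nonneg ((abs_nonneg z).trans hz)])
  calc |f z| = ‖f z‖ := (Real.norm_eq_abs _).symm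
    _ ≤ ‖f‖ * ‖z‖ := f.le_opNorm z
    _ ≤ ‖f‖ * ‖x‖ := by gcongr

theorem bddAbove_dualAbs_set (x : E) : BddAbove {r : ℝ | ∃ z : E, |z| ≤ x ∧ r = |f z|} :=
  ⟨‖f‖ * ‖x‖, by rintro r ⟨z, hz, rfl⟩; exact abs_apply_le_of_abs_le f hz⟩

theorem abs_apply_le_dualAbs {x z : E} (hz : |z| ≤ x) : |f z| ≤ dualAbs f x :=
  le_csSup (bddAbove_dualAbs_set f x) ⟨z, hz, rfl⟩

theorem dualAbs_nonneg {x : E} (hx : 0 ≤ x) : 0 ≤ dualAbs f x := by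
  simpa using abs_apply_le_dualAbs f (z := 0) (by simpa using hx)

theorem dualAbs_le {x : E} {c : ℝ} (hx : 0 ≤ x) (h : ∀ z : E, |z| ≤ x → |f z| ≤ c) :
    dualAbs f x ≤ c :=
  csSup_le ⟨_, 0, by simpa using hx, rfl⟩ (by rintro r ⟨z, hz, rfl⟩; exact h z hz)

theorem dualAbs_le_opNorm_mul {x : E} (hx : 0 ≤ x) : dualAbs f x ≤ ‖f‖ * ‖x‖ :=
  dualAbs_le f hx fun _ => abs_apply_le_of_abs_le f

theorem dualAbs_mono {x y : E} (hx : 0 ≤ x) (hxy : x ≤ y) : dualAbs f x ≤ dualAbs f y :=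
  dualAbs_le f hx fun _ hz => abs_apply_le_dualAbs f (hz.trans hxy)

omit [HasSolidNorm E] [IsOrderedAddMonoid E] in
theorem exists_abs_eq_abs_and_apply_eq_abs (z : E) : ∃ w : E, |w| = |z| ∧ f w = |f z| := by
  rcases le_or_gt 0 (f z) with h | h
  · exact ⟨z, rfl, (abs_of_nonneg h).symm⟩
  · exact ⟨-z, abs_neg z, by rw [map_neg, abs_of_neg h]⟩

theorem dualAbs_add_le {x y : E} (hx : 0 ≤ x) (hy : 0 ≤ y) :
    dualAbs f (x + y) ≤ dualAbs f x + dualAbs f y := by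
  refine dualAbs_le f (add_nonneg hx hy) fun z hz => ?_
  obtain ⟨u, v, rfl, hu, hv⟩ := exists_add_eq_of_abs_le_add hx hy hz
  calc |f (u + v)| ≤ |f u| + |f v| := by rw [map_add]; exact abs_add_le _ _
    _ ≤ dualAbs f x + dualAbs f y :=
      add_le_add (abs_apply_le_dualAbs f hu) (abs_apply_le_dualAbs f hv)

theorem add_abs_apply_le_dualAbs_add {x y z₁ z₂ : E} (h₁ : |z₁| ≤ x) (h₂ : |z₂| ≤ y) :
    |f z₁| + |f z₂| ≤ dualAbs f (x + y) := by
  obtain ⟨w₁, hw₁, hfw₁⟩ := exists_abs_eq_abs_and_apply_eq_abs f z₁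
  obtain ⟨w₂, hw₂, hfw₂⟩ := exists_abs_eq_abs_and_apply_eq_abs f z₂
  have hw : |w₁ + w₂| ≤ x + y :=
    (abs_add_le w₁ w₂).trans (by rw [hw₁, hw₂]; exact add_le_add h₁ h₂)
  calc |f z₁| + |f z₂| = f (w₁ + w₂) := by rw [map_add, hfw₁, hfw₂]
    _ ≤ |f (w₁ + w₂)| := le_abs_self _
    _ ≤ dualAbs f (x + y) := abs_apply_le_dualAbs f hw

theorem dualAbs_add {x y : E} (hx : 0 ≤ x) (hy : 0 ≤ y) :
    dualAbs f (x + y) = dualAbs f x + dualAbs f y := by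
  refine le_antisymm (dualAbs_add_le f hx hy) ?_
  rw [← le_sub_iff_add_le]
  refine dualAbs_le f hx fun z₁ h₁ => ?_
  rw [le_sub_iff_add_le', ← le_sub_iff_add_le]
  exact dualAbs_le f hy fun z₂ h₂ => by
    linarith [add_abs_apply_le_dualAbs_add f h₁ h₂]

theorem dualAbs_zero : dualAbs f 0 = 0 := by
  simpa using dualAbs_add f (le_refl (0 : E)) le_rfl

theorem dualAbs_sub_dualAbs_eq {a b c d : E} (ha : 0 ≤ a) (hb : 0 ≤ b) (hc : 0 ≤ c)
    (hd : 0 ≤ d) (h : a - b = c - d) :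
    dualAbs f a - dualAbs f b = dualAbs f c - dualAbs f d := by
  have := congrArg (dualAbs f) (sub_eq_sub_iff_add_eq_add.1 h)
  rw [dualAbs_add f ha hd, dualAbs_add f hc hb] at this
  linarith

/-- `|f|` on all of `E`, extended from the positive cone through `x = x⁺ - x⁻`. -/
def dualAbsAddHom : E →+ ℝ :=
  AddMonoidHom.mk' (fun x => dualAbs f x⁺ - dualAbs f x⁻) fun x y => by
    have hpos := add_nonneg (posPart_nonneg x) (posPart_nonneg y)
    have hneg := add_nonneg (negPart_nonneg x) (negPart_nonneg y)
    rw [dualAbs_sub_dualAbs_eq f (posPart_nonneg _) (negPart_nonneg _) hpos hneg,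
      dualAbs_add f (posPart_nonneg x) (posPart_nonneg y),
      dualAbs_add f (negPart_nonneg x) (negPart_nonneg y)]
    · ring
    · rw [posPart_sub_negPart, add_sub_add_comm, posPart_sub_negPart, posPart_sub_negPart]

theorem abs_dualAbsAddHom_apply_le (z : E) : |dualAbsAddHom f z| ≤ dualAbs f |z| := by
  have hpos := dualAbs_mono f (posPart_nonneg z)
    (posPart_add_negPart z ▸ le_add_of_nonneg_right (negPart_nonneg z))
  have hneg := dualAbs_mono f (negPart_nonneg z)
    (posPart_add_negPart z ▸ le_add_of_nonneg_left (posPart_nonneg z))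
  have := dualAbs_nonneg f (posPart_nonneg z)
  have := dualAbs_nonneg f (negPart_nonneg z)
  change |dualAbs f z⁺ - dualAbs f z⁻| ≤ _
  exact abs_le.2 ⟨by linarith, by linarith⟩

def dualAbsCLM : E →L[ℝ] ℝ :=
  (dualAbsAddHom f).toRealLinearMap <| AddMonoidHomClass.continuous_of_bound _ ‖f‖ fun z => by
    rw [Real.norm_eq_abs, ← norm_abs_eq_norm z]
    exact (abs_dualAbsAddHom_apply_le f z).trans (dualAbs_le_opNorm_mul f (abs_nonneg z))

theorem dualAbsCLM_apply (x : E) : dualAbsCLM f x = dualAbs f x⁺ - dualAbs f x⁻ := rfl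

theorem dualAbsCLM_apply_of_nonneg {x : E} (hx : 0 ≤ x) : dualAbsCLM f x = dualAbs f x := by
  rw [dualAbsCLM_apply, posPart_eq_self.2 hx, negPart_eq_zero.2 hx, dualAbs_zero, sub_zero]

theorem dualAbs_dualAbsCLM {x : E} (hx : 0 ≤ x) : dualAbs (dualAbsCLM f) x = dualAbs f x := by
  refine le_antisymm (dualAbs_le _ hx fun z hz => ?_) (dualAbs_le f hx fun z hz => ?_)
  · exact (abs_dualAbsAddHom_apply_le f z).trans (dualAbs_mono f (abs_nonneg z) hz)
  · calc |f z| ≤ dualAbs f |z| := abs_apply_le_dualAbs f le_rfl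
      _ = |dualAbsCLM f (|z|)| := by
        rw [dualAbsCLM_apply_of_nonneg f (abs_nonneg z),
          abs_of_nonneg (dualAbs_nonneg f (abs_nonneg z))]
      _ ≤ dualAbs (dualAbsCLM f) x := abs_apply_le_dualAbs _ (by rwa [abs_abs])

end DualAbs

theorem DualDisjoint.dualAbsCLM {E : Type*} [NormedAddCommGroup E] [Lattice E] [HasSolidNorm E]
    [IsOrderedAddMonoid E] [NormedSpace ℝ E] {f g : E →L[ℝ] ℝ} (h : DualDisjoint f g) :
    DualDisjoint (dualAbsCLM f) (dualAbsCLM g) := by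
  intro x hx ε hε
  obtain ⟨y, hy, hyx, hlt⟩ := h x hx ε hε
  refine ⟨y, hy, hyx, ?_⟩
  rwa [dualAbs_dualAbsCLM _ hy, dualAbs_dualAbsCLM _ (sub_nonneg.2 hyx)]

theorem PropertyD.weakStarNull_dualAbsCLM {E : Type*} [NormedAddCommGroup E] [Lattice E]
    [HasSolidNorm E] [IsOrderedAddMonoid E] [NormedSpace ℝ E] (hE : PropertyD E)
    {f : ℕ → E →L[ℝ] ℝ} (hf : WeakStarNull f)
    (hdisj : Pairwise fun n m => DualDisjoint (f n) (f m)) :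
    WeakStarNull fun n => dualAbsCLM (f n) := fun x => by
  simpa only [dualAbsCLM_apply, sub_zero] using
    (hE f hf hdisj _ (posPart_nonneg x)).sub (hE f hf hdisj _ (negPart_nonneg x))

section PositiveOp

variable {E F : Type*} [NormedAddCommGroup E] [Lattice E] [HasSolidNorm E] [IsOrderedAddMonoid E]
  [NormedSpace ℝ E] [NormedAddCommGroup F] [Lattice F] [HasSolidNorm F] [IsOrderedAddMonoid F]
  [NormedSpace ℝ F] {S T : E →L[ℝ] F}

theorem IsPositiveOp.mono (hS : IsPositiveOp S) {x y : E} (h : x ≤ y) : S x ≤ S y := by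
  simpa using hS (y - x) (sub_nonneg.2 h)

theorem IsPositiveOp.abs_apply_le (hS : IsPositiveOp S) (x : E) : |S x| ≤ S |x| :=
  abs_le'.2 ⟨hS.mono (le_abs_self x), by simpa using hS.mono (neg_le_abs x)⟩

theorem IsPositiveOp.apply_le_of_sub (hTS : IsPositiveOp (T - S)) {x : E} (hx : 0 ≤ x) :
    S x ≤ T x := by
  simpa using hTS x hx

theorem norm_comp_le_norm_dualAbsCLM_comp (f : F →L[ℝ] ℝ) (hS : IsPositiveOp S)
    (hTS : IsPositiveOp (T - S)) : ‖f.comp S‖ ≤ ‖(dualAbsCLM f).comp T‖ := by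
  refine ContinuousLinearMap.opNorm_le_bound _ (norm_nonneg _) fun x => ?_
  have hSx : 0 ≤ S |x| := hS |x| (abs_nonneg x)
  have hST : S |x| ≤ T |x| := hTS.apply_le_of_sub (abs_nonneg x)
  calc ‖f (S x)‖ = |f (S x)| := Real.norm_eq_abs _
    _ ≤ dualAbs f (S |x|) := abs_apply_le_dualAbs f (hS.abs_apply_le x)
    _ ≤ dualAbs f (T |x|) := dualAbs_mono f hSx hST
    _ = (dualAbsCLM f).comp T |x| := (dualAbsCLM_apply_of_nonneg f (hSx.trans hST)).symm
    _ ≤ ‖(dualAbsCLM f).comp T‖ * ‖x‖ := by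
      rw [← norm_abs_eq_norm x]
      exact (le_abs_self _).trans (((dualAbsCLM f).comp T).le_opNorm |x|)

end PositiveOp

theorem almostLimited_of_dominated_general
    {E F : Type*} [NormedAddCommGroup E] [Lattice E] [HasSolidNorm E] [IsOrderedAddMonoid E] [NormedSpace ℝ E]
    [NormedAddCommGroup F] [Lattice F] [HasSolidNorm F] [IsOrderedAddMonoid F] [NormedSpace ℝ F]
    (hF : PropertyD F) (S T : E →L[ℝ] F)
    (hS : IsPositiveOp S) (hTS : IsPositiveOp (T - S)) (hT : AlmostLimited T) :
    AlmostLimited S := by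
  intro f hf hdisj
  have hT_abs : Tendsto (fun n => ‖(dualAbsCLM (f n)).comp T‖) atTop (𝓝 0) :=
    hT _ (hF.weakStarNull_dualAbsCLM hf hdisj) fun n m hnm => (hdisj hnm).dualAbsCLM
  exact squeeze_zero (fun n => norm_nonneg _)
    (fun n => norm_comp_le_norm_dualAbsCLM_comp (f n) hS hTS) hT_abs

/-- A positive operator dominated by an almost limited operator into a Banach
lattice with property (d) is itself almost limited. -/
theorem almostLimited_of_dominated
    {E F : Type*} [NormedAddCommGroup E] [Lattice E] [HasSolidNorm E] [IsOrderedAddMonoid E] [NormedSpace ℝ E] [PosSMulStrictMono ℝ E] [PosSMulReflectLT ℝ E]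
    [CompleteSpace E]
    [NormedAddCommGroup F] [Lattice F] [HasSolidNorm F] [IsOrderedAddMonoid F] [NormedSpace ℝ F] [PosSMulStrictMono ℝ F] [PosSMulReflectLT ℝ F] [CompleteSpace F]
    (hF : PropertyD F) (S T : E →L[ℝ] F)
    (hS : IsPositiveOp S) (hTS : IsPositiveOp (T - S)) (hT : AlmostLimited T) :
    AlmostLimited S :=
  almostLimited_of_dominated_general hF S T hS hTS hT
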